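/- For every natural number t, the odd-index Fibonacci number f(4t-1) equals the sum over all odd s with 1 ≤ s ≤ 2t+1 of (2^s · u t s + 2^(s-1) · u t (-s)). -/

import Mathlib

/-!
Give position `s` the weight `2 ^ s` if `s ≥ 0` and `2 ^ (-s - 1)` if `s < 0`, and let `O t`, `E t`
be the weighted sums of `u t` over the odd and the even positions, so that the right-hand side is
`O t`. Since `u t` is supported in `[-(2t+1), 2t]`, pairing the coefficients of `ustep` against the
weights (a summation by parts without boundary terms) gives `O (t+1) = 3 E t - O t` and
`E (t+1) = 8 E t - 3 O t`. This is also how `(f (4t-1), f (4t+1))` evolves, by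
`f (m + 4) = 3 f (m + 2) - f m`, and the initial values agree.
-/

/-- One step of the recursion defining `u`: given `u t`, first the values at odd
positions are computed from `u t`, then the values at even positions are computed from
`u t` and the new odd values. -/
def ustep (v : ℤ → ℤ) : ℤ → ℤ := fun s =>
  let w : ℤ → ℤ := fun s' =>
    if s' < 0 then 2 * v (s' - 1) - v s' + v (s' + 1)
    else v (s' - 1) - v s' + 2 * v (s' + 1)
  if s % 2 = 0 then
    if s < 0 then 2 * w (s - 1) - v s + w (s + 1)
    else w (s - 1) - v s + 2 * w (s + 1)
  else w s

/-- The doubly infinite sequences `u t : ℤ → ℤ`: `u 0` is the indicator function of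
`{0, -1}`, and `u (t+1)` is obtained from `u t` by the two-step reflection rule. -/
def u : ℕ → ℤ → ℤ
  | 0 => fun s => if s = 0 ∨ s = -1 then 1 else 0
  | t + 1 => ustep (u t)

section ustep

variable (v : ℤ → ℤ) {s : ℤ}

lemma ustep_of_odd_of_pos (hodd : s % 2 = 1) (hpos : 0 < s) :
    ustep v s = v (s - 1) - v s + 2 * v (s + 1) := by
  simp only [ustep]
  rw [if_neg (by omega), if_neg (by omega)]

lemma ustep_of_odd_of_neg (hodd : s % 2 = 1) (hneg : s < 0) :
    ustep v s = 2 * v (s - 1) - v s + v (s + 1) := by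
  simp only [ustep]
  rw [if_neg (by omega), if_pos hneg]

lemma ustep_of_even_of_pos (heven : s % 2 = 0) (hpos : 0 < s) :
    ustep v s = v (s - 2) - v (s - 1) + 3 * v s - 2 * v (s + 1) + 4 * v (s + 2) := by
  simp only [ustep]
  rw [if_pos heven, if_neg (by omega), if_neg (by omega), if_neg (by omega)]
  rw [show s - 1 - 1 = s - 2 by ring, show s - 1 + 1 = s by ring,
    show s + 1 - 1 = s by ring, show s + 1 + 1 = s + 2 by ring]
  ring

lemma ustep_of_even_of_neg (heven : s % 2 = 0) (hneg : s < 0) :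
    ustep v s = 4 * v (s - 2) - 2 * v (s - 1) + 3 * v s - v (s + 1) + v (s + 2) := by
  simp only [ustep]
  rw [if_pos heven, if_pos hneg, if_pos (by omega), if_pos (by omega)]
  rw [show s - 1 - 1 = s - 2 by ring, show s - 1 + 1 = s by ring,
    show s + 1 - 1 = s by ring, show s + 1 + 1 = s + 2 by ring]
  ring

lemma ustep_zero : ustep v 0 = 2 * v (-2) - v (-1) + 2 * v 0 - 2 * v 1 + 4 * v 2 := by
  simp only [ustep, Int.zero_emod, lt_irrefl, if_true, if_false, zero_sub, zero_add, neg_add_cancel,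
    Int.reduceNeg, Int.reduceSub, Int.reduceAdd, Int.reduceLT]
  ring

end ustep

lemma u_eq_zero_of_two_mul_lt (t : ℕ) {s : ℤ} (hs : 2 * (t : ℤ) < s) : u t s = 0 := by
  induction t generalizing s with
  | zero => simp only [u]; rw [if_neg (by omega)]
  | succ t ih =>
    push_cast at hs
    change ustep (u t) s = 0
    rcases Int.emod_two_eq s with heven | hodd
    · rw [ustep_of_even_of_pos _ heven (by omega), ih (by omega), ih (by omega), ih (by omega),
        ih (by omega), ih (by omega)]
      ring
    · rw [ustep_of_odd_of_pos _ hodd (by omega), ih (by omega), ih (by omega), ih (by omega)]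
      ring

lemma u_eq_zero_of_lt_neg (t : ℕ) {s : ℤ} (hs : s < -(2 * (t : ℤ) + 1)) : u t s = 0 := by
  induction t generalizing s with
  | zero => simp only [u]; rw [if_neg (by omega)]
  | succ t ih =>
    push_cast at hs
    change ustep (u t) s = 0
    rcases Int.emod_two_eq s with heven | hodd
    · rw [ustep_of_even_of_neg _ heven (by omega), ih (by omega), ih (by omega), ih (by omega),
        ih (by omega), ih (by omega)]
      ring
    · rw [ustep_of_odd_of_neg _ hodd (by omega), ih (by omega), ih (by omega), ih (by omega)]
      ring

def oddWeightedSum (v : ℤ → ℤ) (n : ℕ) : ℤ :=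
  ∑ k ∈ Finset.range n, (2 ^ (2 * k + 1) * v (2 * k + 1) + 2 ^ (2 * k) * v (-(2 * k + 1)))

def evenWeightedSum (v : ℤ → ℤ) (n : ℕ) : ℤ :=
  v 0 + ∑ k ∈ Finset.range n, (2 ^ (2 * k + 2) * v (2 * k + 2) + 2 ^ (2 * k + 1) * v (-(2 * k + 2)))

/-- The subtracted term is the boundary term of the summation by parts; it vanishes as soon as `v`
vanishes at `±2n`, and similarly for `evenWeightedSum_ustep`. -/
lemma oddWeightedSum_ustep (v : ℤ → ℤ) (n : ℕ) :
    oddWeightedSum (ustep v) n = 3 * evenWeightedSum v n - oddWeightedSum v n -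
      (2 ^ (2 * n + 1) * v (2 * n) + 2 ^ (2 * n) * v (-(2 * n))) := by
  induction n with
  | zero =>
    simp only [oddWeightedSum, evenWeightedSum, Finset.range_zero, Finset.sum_empty, Nat.cast_zero,
      mul_zero, neg_zero]
    ring
  | succ n ih =>
    simp only [oddWeightedSum, evenWeightedSum, Finset.sum_range_succ] at ih ⊢
    rw [ustep_of_odd_of_pos v (s := 2 * n + 1) (by omega) (by omega),
      ustep_of_odd_of_neg v (s := -(2 * n + 1)) (by omega) (by omega)]
    push_cast
    ring_nf at ih ⊢
    linear_combination ih

lemma evenWeightedSum_ustep (v : ℤ → ℤ) (n : ℕ) :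
    evenWeightedSum (ustep v) n = 8 * evenWeightedSum v n - 3 * oddWeightedSum v n -
      2 ^ (2 * n) * (4 * v (2 * n) + 2 * v (-(2 * n)) + 2 * v (2 * n + 1) + v (-(2 * n + 1)) -
        4 * v (2 * n + 2) - 2 * v (-(2 * n + 2))) := by
  induction n with
  | zero =>
    simp only [oddWeightedSum, evenWeightedSum, Finset.range_zero, Finset.sum_empty, Nat.cast_zero,
      mul_zero, neg_zero, zero_add, ustep_zero]
    ring
  | succ n ih =>
    simp only [oddWeightedSum, evenWeightedSum, Finset.sum_range_succ] at ih ⊢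
    rw [ustep_of_even_of_pos v (s := 2 * n + 2) (by omega) (by omega),
      ustep_of_even_of_neg v (s := -(2 * n + 2)) (by omega) (by omega)]
    push_cast
    ring_nf at ih ⊢
    linear_combination ih

lemma fib_add_four {f : ℤ → ℤ} (hrec : ∀ n : ℤ, f (n + 1) = f n + f (n - 1)) (m : ℤ) :
    f (m + 4) = 3 * f (m + 2) - f m := by
  have e4 := hrec (m + 3)
  have e3 := hrec (m + 2)
  have e2 := hrec (m + 1)
  ring_nf at e4 e3 e2 ⊢
  linarith

lemma weightedSums_u_eq_fib {f : ℤ → ℤ} (h0 : f 0 = 0) (h1 : f 1 = 1)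
    (hrec : ∀ n : ℤ, f (n + 1) = f n + f (n - 1)) (t : ℕ) {n : ℕ} (hn : t + 1 ≤ n) :
    oddWeightedSum (u t) n = f (4 * t - 1) ∧ evenWeightedSum (u t) n = f (4 * t + 1) := by
  induction t generalizing n with
  | zero =>
    obtain ⟨m, rfl⟩ : ∃ m, n = m + 1 := ⟨n - 1, by omega⟩
    have hfm1 : f (-1) = 1 := by
      have := hrec 0
      simp only [zero_add, zero_sub, h0, h1] at this
      linarith
    simp only [oddWeightedSum, evenWeightedSum, Finset.sum_range_succ']
    simp (disch := push_cast; omega) only [u_eq_zero_of_two_mul_lt, u_eq_zero_of_lt_neg]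
    simp [u, hfm1, h1]
  | succ t ih =>
    obtain ⟨hodd, heven⟩ := ih (n := n) (by omega)
    have e1 := fib_add_four hrec (4 * t - 1)
    have e2 := fib_add_four hrec (4 * t + 1)
    have hX : f (4 * ((t + 1 : ℕ) : ℤ) - 1) = 3 * f (4 * t + 1) - f (4 * t - 1) := by
      push_cast; ring_nf at e1 ⊢; exact e1
    have hY : f (4 * ((t + 1 : ℕ) : ℤ) + 1) = 8 * f (4 * t + 1) - 3 * f (4 * t - 1) := by
      push_cast; ring_nf at e1 e2 ⊢; linarith
    rw [hX, hY, u, oddWeightedSum_ustep, evenWeightedSum_ustep, hodd, heven]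
    simp (disch := omega) [u_eq_zero_of_two_mul_lt, u_eq_zero_of_lt_neg]

lemma Finset.sum_filter_odd_Icc_one {M : Type*} [AddCommMonoid M] (g : ℕ → M) (m : ℕ) :
    ∑ s ∈ (Finset.Icc 1 (2 * m + 1)).filter Odd, g s =
      ∑ k ∈ Finset.range (m + 1), g (2 * k + 1) := by
  symm
  refine Finset.sum_nbij' (fun k => 2 * k + 1) (fun s => s / 2) ?_ ?_ ?_ ?_ (fun _ _ => rfl) <;>
    intro a ha <;>
    simp only [Finset.mem_range, Finset.mem_filter, Finset.mem_Icc, Nat.odd_iff] at ha ⊢ <;> omega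

/-- The partition formula for the odd-index Fibonacci number `f (4t-1)`:
`f (4t-1) = Σ_{s odd, 1 ≤ s ≤ 2t+1} (2^s · u t s + 2^(s-1) · u t (-s))`,
where `f` is the extended Fibonacci sequence. -/
theorem fib_partition_4t_sub_one (f : ℤ → ℤ) (h0 : f 0 = 0) (h1 : f 1 = 1)
    (hrec : ∀ n : ℤ, f (n + 1) = f n + f (n - 1)) (t : ℕ) :
    f (4 * (t : ℤ) - 1) =
      ∑ s ∈ (Finset.Icc 1 (2 * t + 1)).filter (fun s => Odd s),
        (2 ^ s * u t (s : ℤ) + 2 ^ (s - 1) * u t (-(s : ℤ))) := by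
  rw [← (weightedSums_u_eq_fib h0 h1 hrec t le_rfl).1, Finset.sum_filter_odd_Icc_one]
  simp [oddWeightedSum]
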